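/- arXiv:2411.16978 — 3 statements merged into one kernel-verified Lean document; each statement's English description precedes it below -/
import Mathlib

section
/- Let F₁, F₂, A be sub-σ-algebras of F. If A is independent of the σ-algebra σ(F₁ ∪ F₂), then the β-mixing coefficient satisfies β(F₁, σ(A ∪ F₂)) ≤ β(F₁, F₂). -/
open MeasureTheory ProbabilityTheory

/-- A finite measurable partition of `Ω` into sets measurable w.r.t. a sub-σ-algebra `F`. -/
def IsFinMeasPartition {Ω : Type*} (F : MeasurableSpace Ω) {n : ℕ} (A : Fin n → Set Ω) : Prop :=
  (∀ i, MeasurableSet[F] (A i)) ∧ Pairwise (Function.onFun Disjoint A) ∧ (⋃ i, A i) = Set.univ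

/-- The β-mixing (absolute regularity) coefficient between two sub-σ-algebras:
the supremum over finite measurable partitions `{A_i} ⊂ F₁`, `{B_j} ⊂ F₂` of
`(1/2) Σ_i Σ_j |P(A_i ∩ B_j) − P(A_i) P(B_j)|`. -/
noncomputable def betaMix {Ω : Type*} {mΩ : MeasurableSpace Ω} (μ : Measure Ω)
    (F₁ F₂ : MeasurableSpace Ω) : ℝ :=
  sSup { r : ℝ | ∃ (nA nB : ℕ) (A : Fin nA → Set Ω) (B : Fin nB → Set Ω),
    IsFinMeasPartition F₁ A ∧ IsFinMeasPartition F₂ B ∧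
    r = (1 / 2) * ∑ i : Fin nA, ∑ j : Fin nB,
      |(μ (A i ∩ B j)).toReal - (μ (A i)).toReal * (μ (B j)).toReal| }

/-!
Fix partitions `{P_i} ⊂ F₁` and `{C_k} ⊂ σ(A ∪ F₂)`, and let `h_i = E[1_{P_i} | F₂] − P(P_i)`.
Since `A` is independent of `σ(F₁ ∪ F₂)`, `E[1_{P_i} | F₂]` is also the conditional expectation of
`1_{P_i}` given `σ(A ∪ F₂)` (check it on the π-system of sets `a ∩ b`, `a ∈ A`, `b ∈ F₂`), so
`P(P_i ∩ C) − P(P_i) P(C) = ∫_C h_i` for all `C ∈ σ(A ∪ F₂)`. Therefore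
`Σ_k |P(P_i ∩ C_k) − P(P_i) P(C_k)| ≤ ‖h_i‖₁`, and the bound `‖h_i‖₁` is attained, simultaneously
for all `i`, by the `F₂`-partition on whose cells every `h_i` has constant sign.
-/

section Partitions

variable {Ω : Type*}

lemma IsFinMeasPartition.mono {F G : MeasurableSpace Ω} {n : ℕ} {B : Fin n → Set Ω}
    (hB : IsFinMeasPartition F B) (hFG : F ≤ G) : IsFinMeasPartition G B :=
  ⟨fun j => hFG _ (hB.1 j), hB.2⟩

lemma isFinMeasPartition_univ (F : MeasurableSpace Ω) :
    IsFinMeasPartition F fun _ : Fin 1 => (Set.univ : Set Ω) :=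
  ⟨fun _ => MeasurableSet.univ, fun i j h => absurd (Subsingleton.elim i j) h, Set.iUnion_const _⟩

lemma isFinMeasPartition_preimage_singleton {κ : Type*} [MeasurableSpace κ]
    [MeasurableSingletonClass κ] {F : MeasurableSpace Ω} {φ : Ω → κ} (hφ : Measurable[F] φ)
    {n : ℕ} (e : Fin n ≃ κ) :
    IsFinMeasPartition F fun j => φ ⁻¹' {e j} := by
  refine ⟨fun j => hφ (measurableSet_singleton _), fun i j hij => ?_, ?_⟩
  · exact Disjoint.preimage φ (Set.disjoint_singleton.2 (e.injective.ne hij))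
  · rw [← Set.preimage_iUnion, e.surjective.iUnion_comp fun k => ({k} : Set κ),
      Set.iUnion_singleton_eq_range, Set.range_id', Set.preimage_univ]

lemma exists_isFinMeasPartition_sign_constant {ι : Type*} [Finite ι] {F : MeasurableSpace Ω}
    {f : ι → Ω → ℝ} (hf : ∀ i, Measurable[F] (f i)) :
    ∃ (n : ℕ) (B : Fin n → Set Ω), IsFinMeasPartition F B ∧
      ∀ i j, (∀ x ∈ B j, 0 ≤ f i x) ∨ ∀ x ∈ B j, f i x ≤ 0 := by
  let sign : Ω → ι → Bool := fun x i => decide (0 ≤ f i x)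
  have hsign : Measurable[F] sign := measurable_pi_lambda _ fun i =>
    measurable_to_bool <| by
      convert (hf i) (measurableSet_Ici (a := (0 : ℝ))) using 1
      ext x
      simp [sign]
  obtain ⟨n, ⟨e⟩⟩ := Finite.exists_equiv_fin (ι → Bool)
  refine ⟨n, fun j => sign ⁻¹' {e.symm j}, isFinMeasPartition_preimage_singleton hsign e.symm,
    fun i j => ?_⟩
  by_cases hij : e.symm j i
  · exact .inl fun x hx => by simpa [sign, hij] using congrFun hx i
  · exact .inr fun x hx => le_of_lt <| by simpa [sign, hij] using congrFun hx i

end Partitions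

namespace IsFinMeasPartition

variable {Ω : Type*} [mΩ : MeasurableSpace Ω] {μ : Measure Ω} {n : ℕ} {B : Fin n → Set Ω}

lemma sum_measureReal_inter [IsFiniteMeasure μ] (hB : IsFinMeasPartition mΩ B)
    {t : Set Ω} (ht : MeasurableSet t) :
    ∑ j, μ.real (B j ∩ t) = μ.real t := by
  rw [← measureReal_iUnion_fintype
    (fun i j hij => (hB.2.1 hij).mono Set.inter_subset_left Set.inter_subset_left)
    (fun j => (hB.1 j).inter ht), ← Set.iUnion_inter, hB.2.2, Set.univ_inter]

lemma sum_setIntegral (hB : IsFinMeasPartition mΩ B) {f : Ω → ℝ} (hf : Integrable f μ) :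
    ∑ j, ∫ x in B j, f x ∂μ = ∫ x, f x ∂μ := by
  rw [← integral_iUnion_fintype hB.1 hB.2.1 fun _ => hf.integrableOn, hB.2.2, setIntegral_univ]

lemma sum_abs_setIntegral_le (hB : IsFinMeasPartition mΩ B) {f : Ω → ℝ}
    (hf : Integrable f μ) :
    ∑ j, |∫ x in B j, f x ∂μ| ≤ ∫ x, |f x| ∂μ := by
  rw [← hB.sum_setIntegral hf.abs]
  exact Finset.sum_le_sum fun j _ => abs_integral_le_integral_abs

lemma sum_abs_setIntegral_eq (hB : IsFinMeasPartition mΩ B) {f : Ω → ℝ}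
    (hf : Integrable f μ) (hsign : ∀ j, (∀ x ∈ B j, 0 ≤ f x) ∨ ∀ x ∈ B j, f x ≤ 0) :
    ∑ j, |∫ x in B j, f x ∂μ| = ∫ x, |f x| ∂μ := by
  rw [← hB.sum_setIntegral hf.abs]
  refine Finset.sum_congr rfl fun j _ => ?_
  rcases hsign j with hpos | hneg
  · rw [abs_of_nonneg (setIntegral_nonneg (hB.1 j) hpos),
      setIntegral_congr_fun (hB.1 j) fun x hx => abs_of_nonneg (hpos x hx)]
  · rw [abs_of_nonpos (setIntegral_nonpos (hB.1 j) hneg),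
      setIntegral_congr_fun (hB.1 j) fun x hx => abs_of_nonpos (hneg x hx), integral_neg]

end IsFinMeasPartition

section BetaMix

variable {Ω : Type*} {F₁ F₂ : MeasurableSpace Ω} [mΩ : MeasurableSpace Ω] {μ : Measure Ω}
  {nA nB : ℕ} {A : Fin nA → Set Ω} {B : Fin nB → Set Ω}

lemma sum_abs_measureReal_inter_sub_mul_le_two [IsProbabilityMeasure μ]
    (hA : IsFinMeasPartition mΩ A) (hB : IsFinMeasPartition mΩ B) :
    ∑ i, ∑ j, |μ.real (A i ∩ B j) - μ.real (A i) * μ.real (B j)| ≤ 2 := by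
  have hsumA : ∑ i, μ.real (A i) = 1 := by
    simpa using hA.sum_measureReal_inter (μ := μ) MeasurableSet.univ
  have hsumB : ∑ j, μ.real (B j) = 1 := by
    simpa using hB.sum_measureReal_inter (μ := μ) MeasurableSet.univ
  have hinter : ∑ i, ∑ j, μ.real (A i ∩ B j) = 1 := by
    simp_rw [Set.inter_comm (A _), hB.sum_measureReal_inter (hA.1 _), hsumA]
  calc ∑ i, ∑ j, |μ.real (A i ∩ B j) - μ.real (A i) * μ.real (B j)|
      ≤ ∑ i, ∑ j, (μ.real (A i ∩ B j) + μ.real (A i) * μ.real (B j)) := by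
        gcongr with i _ j _
        exact (abs_sub _ _).trans_eq <| by
          rw [abs_of_nonneg measureReal_nonneg, abs_of_nonneg (by positivity)]
    _ = 2 := by
        simp only [Finset.sum_add_distrib, ← Finset.sum_mul_sum, hinter, hsumA, hsumB]
        norm_num

lemma le_betaMix [IsProbabilityMeasure μ] (hF₁ : F₁ ≤ mΩ) (hF₂ : F₂ ≤ mΩ)
    (hA : IsFinMeasPartition F₁ A) (hB : IsFinMeasPartition F₂ B) :
    (1 / 2) * ∑ i, ∑ j, |μ.real (A i ∩ B j) - μ.real (A i) * μ.real (B j)| ≤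
      betaMix μ F₁ F₂ := by
  refine le_csSup ⟨1, ?_⟩ ⟨nA, nB, A, B, hA, hB, rfl⟩
  rintro _ ⟨nA', nB', A', B', hA', hB', rfl⟩
  have h := sum_abs_measureReal_inter_sub_mul_le_two (μ := μ) (hA'.mono hF₁) (hB'.mono hF₂)
  simp only [measureReal_def] at h
  linarith

lemma betaMix_le {c : ℝ}
    (h : ∀ (nA nB : ℕ) (A : Fin nA → Set Ω) (B : Fin nB → Set Ω), IsFinMeasPartition F₁ A →
      IsFinMeasPartition F₂ B →
      (1 / 2) * ∑ i, ∑ j, |μ.real (A i ∩ B j) - μ.real (A i) * μ.real (B j)| ≤ c) :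
    betaMix μ F₁ F₂ ≤ c := by
  refine csSup_le ⟨_, 1, 1, _, _, isFinMeasPartition_univ F₁, isFinMeasPartition_univ F₂, rfl⟩ ?_
  rintro _ ⟨nA, nB, A, B, hA, hB, rfl⟩
  exact h nA nB A B hA hB

end BetaMix

section Independence

variable {Ω : Type*}

lemma isPiSystem_image2_inter (A F : MeasurableSpace Ω) :
    IsPiSystem (Set.image2 (· ∩ ·) {s | MeasurableSet[A] s} {s | MeasurableSet[F] s}) := by
  rintro _ ⟨a₁, ha₁, b₁, hb₁, rfl⟩ _ ⟨a₂, ha₂, b₂, hb₂, rfl⟩ -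
  exact ⟨a₁ ∩ a₂, ha₁.inter ha₂, b₁ ∩ b₂, hb₁.inter hb₂, Set.inter_inter_inter_comm _ _ _ _⟩

lemma sup_eq_generateFrom_image2_inter (A F : MeasurableSpace Ω) :
    A ⊔ F = MeasurableSpace.generateFrom
      (Set.image2 (· ∩ ·) {s | MeasurableSet[A] s} {s | MeasurableSet[F] s}) := by
  refine le_antisymm (sup_le (fun a ha => ?_) fun b hb => ?_) ?_
  · exact .basic _ ⟨a, ha, Set.univ, .univ, Set.inter_univ a⟩
  · exact .basic _ ⟨Set.univ, .univ, b, hb, Set.univ_inter b⟩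
  · refine MeasurableSpace.generateFrom_le ?_
    rintro _ ⟨a, ha, b, hb, rfl⟩
    exact (le_sup_left (b := F) _ ha).inter (le_sup_right (a := A) _ hb)

variable {A F G : MeasurableSpace Ω} [mΩ : MeasurableSpace Ω] {μ : Measure Ω}

lemma setIntegral_eq_measureReal_mul_integral_of_indep (hA : A ≤ mΩ) (hG : G ≤ mΩ)
    (hAG : Indep A G μ) {a : Set Ω} (ha : MeasurableSet[A] a) {φ : Ω → ℝ}
    (hφ : StronglyMeasurable[G] φ) :
    ∫ x in a, φ x ∂μ = μ.real a * ∫ x, φ x ∂μ :=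
  Indep.setIntegral_eq_mul (mΩ := mΩ) (m𝓧 := G) (X := id) hA (by rwa [MeasurableSpace.comap_id])
    (@Measurable.aemeasurable _ _ mΩ G _ _ (measurable_id'' hG)) ha hφ.aestronglyMeasurable

lemma setIntegral_condExp_of_indep_sup [IsFiniteMeasure μ] (hA : A ≤ mΩ) (hFG : F ≤ G)
    (hG : G ≤ mΩ) (hAG : Indep A G μ) {f : Ω → ℝ} (hf : StronglyMeasurable[G] f)
    (hfi : Integrable f μ) {C : Set Ω} (hC : MeasurableSet[A ⊔ F] C) :
    ∫ x in C, (μ[f|F]) x ∂μ = ∫ x in C, f x ∂μ := by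
  have hF : F ≤ mΩ := hFG.trans hG
  have hAF : A ⊔ F ≤ mΩ := sup_le hA hF
  have hgi : Integrable (μ[f|F]) μ := integrable_condExp
  induction C, hC using MeasurableSpace.induction_on_inter
    (sup_eq_generateFrom_image2_inter A F) (isPiSystem_image2_inter A F) with
  | empty => simp
  | basic _ hab =>
    obtain ⟨a, ha, b, hb, rfl⟩ := hab
    have hinter : ∀ φ : Ω → ℝ, StronglyMeasurable[G] φ →
        ∫ x in a ∩ b, φ x ∂μ = μ.real a * ∫ x in b, φ x ∂μ := fun φ hφ => by
      rw [← setIntegral_indicator (hF b hb), setIntegral_eq_measureReal_mul_integral_of_indep hA hG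
        hAG ha (hφ.indicator (hFG b hb)), integral_indicator (hF b hb)]
    rw [hinter _ (stronglyMeasurable_condExp.mono hFG), hinter f hf, setIntegral_condExp hF hfi hb]
  | compl t ht ih =>
    have h_add := integral_add_compl (hAF t ht) hgi
    rw [integral_condExp hF, ← integral_add_compl (hAF t ht) hfi, ih] at h_add
    linarith
  | iUnion t hdisj ht ih =>
    rw [integral_iUnion (fun i => hAF _ (ht i)) hdisj hgi.integrableOn,
      integral_iUnion (fun i => hAF _ (ht i)) hdisj hfi.integrableOn]
    exact tsum_congr ih

lemma measureReal_inter_sub_mul_eq_setIntegral_condExp [IsFiniteMeasure μ] (hA : A ≤ mΩ)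
    (hFG : F ≤ G) (hG : G ≤ mΩ) (hAG : Indep A G μ) {s : Set Ω} (hs : MeasurableSet[G] s)
    {C : Set Ω} (hC : MeasurableSet[A ⊔ F] C) :
    μ.real (s ∩ C) - μ.real s * μ.real C = ∫ x in C, (μ[s.indicator 1|F] x - μ.real s) ∂μ := by
  have hsm : MeasurableSet s := hG s hs
  rw [integral_sub integrable_condExp.integrableOn ((integrable_const _).integrableOn),
    setIntegral_condExp_of_indep_sup hA hFG hG hAG (stronglyMeasurable_one.indicator hs)
      ((integrable_const (1 : ℝ)).indicator hsm) hC,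
    setIntegral_indicator hsm, setIntegral_const]
  simp [Set.inter_comm, mul_comm]

end Independence

/-- If `A` is independent of `σ(F₁ ∪ F₂)`, then `β(F₁, σ(A ∪ F₂)) ≤ β(F₁, F₂)`. -/
theorem betaMix_sup_le_of_indep {Ω : Type*} [m : MeasurableSpace Ω]
    (μ : Measure Ω) [IsProbabilityMeasure μ]
    (F₁ F₂ A : MeasurableSpace Ω) (hF₁ : F₁ ≤ m) (hF₂ : F₂ ≤ m) (hA : A ≤ m)
    (hindep : @Indep Ω A (F₁ ⊔ F₂) m μ) :
    betaMix μ F₁ (A ⊔ F₂) ≤ betaMix μ F₁ F₂ := by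
  -- `A` is the most recent local instance; restore `m` as the ambient σ-algebra
  let _ : MeasurableSpace Ω := m
  refine betaMix_le fun nA nC P C hP hC => ?_
  set h : Fin nA → Ω → ℝ := fun i x => μ[(P i).indicator 1|F₂] x - μ.real (P i)
  have hcov : ∀ i D, MeasurableSet[A ⊔ F₂] D →
      μ.real (P i ∩ D) - μ.real (P i) * μ.real D = ∫ x in D, h i x ∂μ := fun i _ hD =>
    measureReal_inter_sub_mul_eq_setIntegral_condExp hA le_sup_right (sup_le hF₁ hF₂) hindep
      (le_sup_left (b := F₂) _ (hP.1 i)) hD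
  have hint : ∀ i, Integrable (h i) μ := fun i => integrable_condExp.sub (integrable_const _)
  obtain ⟨nB, B, hB, hsign⟩ := exists_isFinMeasPartition_sign_constant (F := F₂) (f := h)
    fun i => stronglyMeasurable_condExp.measurable.sub_const _
  refine le_trans ?_ (le_betaMix hF₁ hF₂ hP hB)
  gcongr _ * ?_
  calc ∑ i, ∑ k, |μ.real (P i ∩ C k) - μ.real (P i) * μ.real (C k)|
      = ∑ i, ∑ k, |∫ x in C k, h i x ∂μ| := by simp_rw [hcov _ _ (hC.1 _)]
    _ ≤ ∑ i, ∫ x, |h i x| ∂μ := by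
      gcongr with i
      exact (hC.mono (sup_le hA hF₂)).sum_abs_setIntegral_le (hint i)
    _ = ∑ i, ∑ j, |∫ x in B j, h i x ∂μ| := by
      simp_rw [(hB.mono hF₂).sum_abs_setIntegral_eq (hint _) (hsign _)]
    _ = ∑ i, ∑ j, |μ.real (P i ∩ B j) - μ.real (P i) * μ.real (B j)| := by
      simp_rw [hcov _ _ (le_sup_right (a := A) _ (hB.1 _))]
end

section
/- Fix m > 0 and q ∈ ℕ⁺, and positive integers q₁ ≥ q₂ ≥ ... ≥ q_S with Σ_s q_s = q. Then the number τ^m_{q₁,...,q_S} of vectors i ∈ I_n^q whose m-profile equals (q₁,...,q_S) satisfies τ^m_{q₁,...,q_S} ≤ C · n^S · η_m^{q−S}, where C depends only on (q₁,...,q_S), n = |I_n|, and η_m = max_i |N_i^m| is the maximal m-neighbourhood size. -/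
/-!
A vector with `S` classes admits a spanning forest of its proximity graph with `S` roots. Given
the forest's parent map (at most `q ^ q` choices), the vector is determined by its values at the
`S` roots (`n` choices each) and, at every other position, by the index of its value in the
`m`-neighbourhood of its parent's value (at most `η_m` choices each).
-/

open scoped Classical

/-- The multiset of sizes of the equivalence classes of the `m`-connectedness relation
among the components of a vector `v : Fin q → I` (classes taken as subsets of positions,
generated by `a ~ b ↔ dist (v a) (v b) ≤ m`). -/
noncomputable def classSizes {I : Type*} [MetricSpace I] {q : ℕ} (m : ℝ) (v : Fin q → I) :
    Multiset ℕ :=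
  ((Finset.univ.image fun a : Fin q =>
      {b : Fin q | Relation.EqvGen (fun x y : Fin q => dist (v x) (v y) ≤ m) a b}).val).map
    fun C => (Finset.univ.filter fun a : Fin q => a ∈ C).card

/-- The `m`-profile of a vector of indices: the sizes of its `m`-connectedness classes,
arranged in decreasing order. -/
noncomputable def mProfile {I : Type*} [MetricSpace I] {q : ℕ} (m : ℝ) (v : Fin q → I) :
    List ℕ :=
  (Multiset.sort (classSizes m v) (· ≤ ·)).reverse

open Finset

/-- The fixed points of `T` are the roots; the height function rules out cycles. -/
def IsRootedForest {α : Type*} (T : α → α) : Prop :=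
  ∃ height : α → ℕ, ∀ a, T a ≠ a → height (T a) < height a

def compatibleLabellings {α β : Type*} [Fintype α] [DecidableEq α] [Fintype β] [DecidableEq β]
    (T : α → α) (N : β → Finset β) : Finset (α → β) :=
  {v | ∀ a, T a ≠ a → v a ∈ N (v (T a))}

theorem IsRootedForest.card_compatibleLabellings_le {α β : Type*} [Fintype α] [DecidableEq α]
    [Fintype β] [DecidableEq β] {T : α → α} (hT : IsRootedForest T) (N : β → Finset β)
    {k : ℕ} (hN : ∀ b, #(N b) ≤ k) :
    #(compatibleLabellings T N) ≤
      Fintype.card β ^ #{a | T a = a} * k ^ (Fintype.card α - #{a | T a = a}) := by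
  obtain ⟨height, hheight⟩ := hT
  let idx (v : α → β) (a : α) : ℕ := (N (v (T a))).toList.idxOf (v a)
  let encode (v : α → β) : ({a // T a = a} → β) × ({a // ¬T a = a} → ℕ) :=
    (fun a => v a, fun a => idx v a)
  calc _ ≤ #((univ : Finset ({a // T a = a} → β)) ×ˢ
          Fintype.piFinset fun _ : {a // ¬T a = a} => range k) := by
        refine card_le_card_of_injOn encode ?_ ?_
        · intro v hv
          simp only [compatibleLabellings, coe_filter, mem_univ, true_and, Set.mem_ofPred_eq] at hv
          simp only [coe_product, coe_univ, Set.mem_prod, Set.mem_univ, true_and, mem_coe,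
            Fintype.mem_piFinset, mem_range, encode]
          intro a
          calc idx v a < #(N (v (T a))) := by
                rw [← length_toList]
                exact List.idxOf_lt_length_iff.mpr (mem_toList.mpr (hv a a.2))
            _ ≤ k := hN _
        · intro v hv w hw hvw
          simp only [compatibleLabellings, coe_filter, mem_univ, true_and,
            Set.mem_ofPred_eq] at hv hw
          simp only [encode, Prod.mk.injEq, funext_iff, Subtype.forall] at hvw
          funext a
          induction hn : height a using Nat.strong_induction_on generalizing a with
          | _ n ih =>
            by_cases ha : T a = a
            · exact hvw.1 a ha
            have hparent : v (T a) = w (T a) := ih _ (hn ▸ hheight a ha) _ rfl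
            have hidx := hvw.2 a ha
            simp only [idx, hparent] at hidx
            exact (List.idxOf_inj (mem_toList.mpr (hparent ▸ hv a ha))).mp hidx
    _ = _ := by
        have hnonroots := card_filter_add_card_filter_not (s := univ) fun a => T a = a
        rw [card_univ] at hnonroots
        simp [Fintype.card_subtype, ← hnonroots]

namespace SimpleGraph

variable {V : Type*} {G : SimpleGraph V}

theorem Reachable.exists_adj_dist_lt {a b : V} (h : G.Reachable a b) (hne : a ≠ b) :
    ∃ w, G.Adj a w ∧ G.dist w b < G.dist a b := by
  obtain ⟨p, hp⟩ := h.exists_walk_length_eq_dist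
  cases p with
  | nil => exact absurd rfl hne
  | cons hadj p' =>
    rw [Walk.length_cons] at hp
    exact ⟨_, hadj, (dist_le p').trans_lt (by omega)⟩

/-- Root each component at a chosen vertex and let the parent of any other vertex be a
neighbour closer to that root. -/
theorem exists_isRootedForest_adj [Finite V] (G : SimpleGraph V) :
    ∃ T : V → V, IsRootedForest T ∧ (∀ a, T a ≠ a → G.Adj a (T a)) ∧
      Nat.card {a // T a = a} = Nat.card G.ConnectedComponent := by
  let root (a : V) : V := (G.connectedComponentMk a).out
  have root_reachable (a : V) : G.Reachable a (root a) :=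
    ConnectedComponent.exact (Quot.out_eq (G.connectedComponentMk a)).symm
  have root_adj {a b : V} (h : G.Adj a b) : root b = root a := by
    simp only [root, ConnectedComponent.eq.mpr h.symm.reachable]
  have step (a : V) (ha : a ≠ root a) :
      ∃ w, G.Adj a w ∧ G.dist w (root a) < G.dist a (root a) :=
    (root_reachable a).exists_adj_dist_lt ha
  let T (a : V) : V := if ha : a = root a then a else (step a ha).choose
  have T_spec (a : V) (ha : a ≠ root a) :
      G.Adj a (T a) ∧ G.dist (T a) (root a) < G.dist a (root a) := by
    simp only [T, dif_neg ha]
    exact (step a ha).choose_spec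
  have T_eq_self_iff (a : V) : T a = a ↔ a = root a := by
    refine ⟨fun h => ?_, fun h => by simp only [T, dif_pos h]⟩
    by_contra ha
    exact (T_spec a ha).1.ne h.symm
  refine ⟨T, ⟨fun a => G.dist a (root a), fun a hT => ?_⟩, fun a hT => ?_, ?_⟩
  · have ha := (T_eq_self_iff a).not.mp hT
    show G.dist (T a) (root (T a)) < G.dist a (root a)
    rw [root_adj (T_spec a ha).1]
    exact (T_spec a ha).2
  · exact (T_spec a ((T_eq_self_iff a).not.mp hT)).1
  · refine Nat.card_eq_of_bijective (fun a => G.connectedComponentMk a) ⟨?_, fun c => ?_⟩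
    · rintro ⟨a, ha⟩ ⟨b, hb⟩ hab
      refine Subtype.ext (show a = b from ?_)
      rw [(T_eq_self_iff a).mp ha, (T_eq_self_iff b).mp hb]
      exact congrArg Quot.out hab
    · refine ⟨⟨c.out, (T_eq_self_iff _).mpr ?_⟩, Quot.out_eq c⟩
      exact congrArg Quot.out (Quot.out_eq c).symm

end SimpleGraph

section Proximity

variable {ι I : Type*} [PseudoMetricSpace I]

instance (m : ℝ) (v : ι → I) : Std.Symm fun a b : ι => dist (v a) (v b) ≤ m :=
  ⟨fun a b h => by rwa [dist_comm]⟩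

def proximityGraph (m : ℝ) (v : ι → I) : SimpleGraph ι :=
  SimpleGraph.fromEdgeSet (Sym2.fromRel (r := fun a b => dist (v a) (v b) ≤ m) inferInstance)

theorem proximityGraph_adj {m : ℝ} {v : ι → I} {a b : ι} (h : (proximityGraph m v).Adj a b) :
    dist (v a) (v b) ≤ m :=
  h.1

theorem reachable_proximityGraph (m : ℝ) (v : ι → I) :
    (proximityGraph m v).Reachable = Relation.EqvGen fun a b => dist (v a) (v b) ≤ m := by
  rw [proximityGraph, SimpleGraph.reachable_fromEdgeSet_fromRel_eq_reflTransGen,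
    Relation.EqvGen.eqvGen_eq_reflTransGen]

end Proximity

theorem length_mProfile {I : Type*} [MetricSpace I] {q : ℕ} (m : ℝ) (v : Fin q → I) :
    (mProfile m v).length = Nat.card (proximityGraph m v).ConnectedComponent := by
  have hclass : (fun a : Fin q => {b | Relation.EqvGen (fun x y => dist (v x) (v y) ≤ m) a b}) =
      fun a => ((proximityGraph m v).connectedComponentMk a).supp := by
    funext a
    ext b
    rw [Set.mem_ofPred_eq, ← reachable_proximityGraph,
      SimpleGraph.ConnectedComponent.mem_supp_iff, SimpleGraph.ConnectedComponent.eq,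
      SimpleGraph.reachable_comm]
  calc (mProfile m v).length
      = #(univ.image fun a : Fin q =>
          {b | Relation.EqvGen (fun x y => dist (v x) (v y) ≤ m) a b}) := by
        rw [mProfile, List.length_reverse, Multiset.length_sort, classSizes, Multiset.card_map]
        rfl
    _ = Nat.card (proximityGraph m v).ConnectedComponent := by
        rw [hclass, ← Function.comp_def SimpleGraph.ConnectedComponent.supp, image_comp,
          image_univ_of_surjective (f := (proximityGraph m v).connectedComponentMk)
            Quot.mk_surjective,
          card_image_of_injective _ SimpleGraph.ConnectedComponent.supp_injective, card_univ,
          Nat.card_eq_fintype_card]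

theorem card_mProfile_eq_le {I : Type*} [Fintype I] [MetricSpace I] {q : ℕ} (m : ℝ)
    (L : List ℕ) :
    #{v : Fin q → I | mProfile m v = L} ≤
      q ^ q * (Fintype.card I ^ L.length *
        (univ.sup fun i : I => #{j | dist i j ≤ m}) ^ (q - L.length)) := by
  set S := L.length
  set η := univ.sup fun i : I => #{j | dist i j ≤ m}
  let N (i : I) : Finset I := {j | dist i j ≤ m}
  let forests : Finset (Fin q → Fin q) := {T | IsRootedForest T ∧ #{a | T a = a} = S}
  have hcover : ({v : Fin q → I | mProfile m v = L} : Finset _) ⊆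
      forests.biUnion fun T => compatibleLabellings T N := by
    intro v hv
    obtain ⟨T, hT, hadj, hroots⟩ := (proximityGraph m v).exists_isRootedForest_adj
    have hS : #{a | T a = a} = S := by
      rw [← Fintype.card_subtype, ← Nat.card_eq_fintype_card, hroots, ← length_mProfile,
        (mem_filter.mp hv).2]
    simp only [forests, compatibleLabellings, N, mem_biUnion, mem_filter, mem_univ, true_and]
    exact ⟨T, ⟨hT, hS⟩, fun a ha =>
      dist_comm (v a) (v (T a)) ▸ proximityGraph_adj (hadj a ha)⟩
  calc _ ≤ ∑ T ∈ forests, #(compatibleLabellings T N) :=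
        (card_le_card hcover).trans card_biUnion_le
    _ ≤ ∑ _T ∈ forests, Fintype.card I ^ S * η ^ (q - S) := by
        refine sum_le_sum fun T hT => ?_
        obtain ⟨hforest, hroots⟩ := (mem_filter.mp hT).2
        have hcount := hforest.card_compatibleLabellings_le N fun i =>
          le_sup (f := fun i => #(N i)) (mem_univ i)
        rw [hroots, Fintype.card_fin] at hcount
        exact hcount
    _ ≤ q ^ q * (Fintype.card I ^ S * η ^ (q - S)) := by
        rw [sum_const, smul_eq_mul]
        gcongr
        simpa using card_le_univ forests

theorem card_mProfile_le_general {q S : ℕ} (L : List ℕ) (hlen : L.length = S) :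
    ∃ C : ℝ, 0 < C ∧
      ∀ (I : Type) (_ : Fintype I) (_ : MetricSpace I) (m : ℝ), 0 < m →
        ((Finset.univ.filter fun v : Fin q → I => mProfile m v = L).card : ℝ) ≤
          C * (Fintype.card I : ℝ) ^ S *
            ((Finset.univ.sup (fun i : I =>
              (Finset.univ.filter fun j : I => dist i j ≤ m).card) : ℕ) : ℝ) ^ (q - S) := by
  refine ⟨(q ^ q : ℕ), Nat.cast_pos.mpr Nat.pow_self_pos, fun I _ _ m _ => ?_⟩
  rw [mul_assoc]
  exact_mod_cast hlen ▸ card_mProfile_eq_le m L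

/-- For a partition `q₁ ≥ ... ≥ q_S > 0` of `q`, the number `τ^m_{q₁,...,q_S}` of vectors in
`I_n^q` with `m`-profile `(q₁,...,q_S)` is at most `C · n^S · η_m^{q−S}`, where `C` depends
only on `(q₁,...,q_S)`, `n = |I_n|` and `η_m` is the maximal `m`-neighbourhood size. -/
theorem card_mProfile_le {q S : ℕ} (L : List ℕ) (hlen : L.length = S)
    (hpos : ∀ x ∈ L, 0 < x) (hsorted : L.Pairwise (· ≥ ·)) (hsum : L.sum = q) :
    ∃ C : ℝ, 0 < C ∧
      ∀ (I : Type) (_ : Fintype I) (_ : MetricSpace I) (m : ℝ), 0 < m →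
        ((Finset.univ.filter fun v : Fin q → I => mProfile m v = L).card : ℝ) ≤
          C * (Fintype.card I : ℝ) ^ S *
            ((Finset.univ.sup (fun i : I =>
              (Finset.univ.filter fun j : I => dist i j ≤ m).card) : ℕ) : ℝ) ^ (q - S) :=
  card_mProfile_le_general L hlen
end

section
/- Coupling moment bound: Let X, X̃ be random variables with X̃ independent of a random vector V, and let f, f̃ be measurable with f = f(V, X), f̃ = f(V, X̃). If J ≥ 1, δ > 0, ‖f‖_{J+δ} and ‖f̃‖_{J+δ} are finite, and E f̃ = 0 via degeneracy, then |E f| ≤ (‖f‖_{J+δ} + ‖f̃‖_{J+δ}) · P(X ≠ X̃)^{δ/(J+δ)}. -/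
open MeasureTheory ProbabilityTheory

open scoped ENNReal

/-! Since `E f̃ = 0` and `f = f̃` off `{X ≠ X̃}`, `E f = E (f - f̃)` with `f - f̃` supported in
`{X ≠ X̃}`. Hölder's inequality on that set bounds this by `‖f - f̃‖_p P(X ≠ X̃)^(1 - 1/p)` for
`p = J + δ`, and `1 - 1/p ≥ δ/p` because `J ≥ 1` while `P(X ≠ X̃) ≤ 1`. -/

section

variable {α E : Type*} [MeasurableSpace α] {μ : Measure α} [NormedAddCommGroup E]

theorem eLpNorm_le_eLpNorm_mul_rpow_measure_of_support_subset {f : α → E} {s : Set α}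
    (hsf : f.support ⊆ s) {p q : ℝ≥0∞} (hpq : p ≤ q) (hf : AEStronglyMeasurable f μ) :
    eLpNorm f p μ ≤ eLpNorm f q μ * μ s ^ (1 / p.toReal - 1 / q.toReal) := by
  have h := eLpNorm_le_eLpNorm_mul_rpow_measure_univ hpq (hf.restrict (s := s))
  rwa [eLpNorm_restrict_eq_of_support_subset hsf, eLpNorm_restrict_eq_of_support_subset hsf,
    Measure.restrict_apply_univ] at h

theorem enorm_integral_le_of_eqOn_compl [NormedSpace ℝ E] {f f' : α → E} {s : Set α}
    (hfs : Set.EqOn f f' sᶜ) (hf : Integrable f μ) (hf' : Integrable f' μ)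
    (hmean : ∫ x, f' x ∂μ = 0) {p : ℝ≥0∞} (hp : 1 ≤ p) :
    ‖∫ x, f x ∂μ‖ₑ ≤ (eLpNorm f p μ + eLpNorm f' p μ) * μ s ^ (1 - 1 / p.toReal) := by
  have hsupp : (f - f').support ⊆ s := fun x hx ↦ by
    by_contra hxs
    exact hx (sub_eq_zero.2 (hfs hxs))
  have hint : ∫ x, f x ∂μ = ∫ x, (f - f') x ∂μ := by
    rw [Pi.sub_def, integral_sub hf hf', hmean, sub_zero]
  calc ‖∫ x, f x ∂μ‖ₑ ≤ eLpNorm (f - f') 1 μ := by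
        rw [hint, eLpNorm_one_eq_lintegral_enorm]
        exact enorm_integral_le_lintegral_enorm _
    _ ≤ eLpNorm (f - f') p μ * μ s ^ (1 - 1 / p.toReal) := by
        simpa using eLpNorm_le_eLpNorm_mul_rpow_measure_of_support_subset hsupp hp
          (hf.sub hf').aestronglyMeasurable
    _ ≤ (eLpNorm f p μ + eLpNorm f' p μ) * μ s ^ (1 - 1 / p.toReal) := by
        gcongr
        exact eLpNorm_sub_le hf.aestronglyMeasurable hf'.aestronglyMeasurable hp

end

theorem coupling_moment_bound_general {Ω α β : Type*} [MeasurableSpace Ω]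
    [MeasurableSpace α] [MeasurableSpace β]
    (μ : Measure Ω) [IsProbabilityMeasure μ]
    (V : Ω → α) (X X' : Ω → β) (F : α → β → ℝ)
    (J δ : ℝ) (hJ : 1 ≤ J) (hδ : 0 < δ)
    (hf : MemLp (fun ω => F (V ω) (X ω)) (ENNReal.ofReal (J + δ)) μ)
    (hf' : MemLp (fun ω => F (V ω) (X' ω)) (ENNReal.ofReal (J + δ)) μ)
    (hmean : ∫ ω, F (V ω) (X' ω) ∂μ = 0) :
    |∫ ω, F (V ω) (X ω) ∂μ| ≤
      ((eLpNorm (fun ω => F (V ω) (X ω)) (ENNReal.ofReal (J + δ)) μ).toReal +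
        (eLpNorm (fun ω => F (V ω) (X' ω)) (ENNReal.ofReal (J + δ)) μ).toReal) *
      (μ {ω | X ω ≠ X' ω}).toReal ^ (δ / (J + δ)) := by
  have hp : 1 ≤ ENNReal.ofReal (J + δ) := ENNReal.one_le_ofReal.2 (by linarith)
  have hexp : δ / (J + δ) ≤ 1 - 1 / (ENNReal.ofReal (J + δ)).toReal := by
    rw [ENNReal.toReal_ofReal (by linarith), le_sub_iff_add_le, ← add_div,
      div_le_one (by linarith)]
    linarith
  have hfs : Set.EqOn (fun ω => F (V ω) (X ω)) (fun ω => F (V ω) (X' ω)) {ω | X ω ≠ X' ω}ᶜ :=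
    fun ω hω ↦ by simp_all
  have key := (enorm_integral_le_of_eqOn_compl hfs (hf.integrable hp) (hf'.integrable hp)
    hmean hp).trans (mul_le_mul_right (ENNReal.rpow_le_rpow_of_exponent_ge prob_le_one hexp) _)
  have hfin : (eLpNorm (fun ω => F (V ω) (X ω)) (ENNReal.ofReal (J + δ)) μ +
      eLpNorm (fun ω => F (V ω) (X' ω)) (ENNReal.ofReal (J + δ)) μ) *
      μ {ω | X ω ≠ X' ω} ^ (δ / (J + δ)) ≠ ⊤ :=
    ENNReal.mul_ne_top (ENNReal.add_ne_top.2 ⟨hf.eLpNorm_ne_top, hf'.eLpNorm_ne_top⟩)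
      (ENNReal.rpow_ne_top_of_nonneg (by positivity) (measure_ne_top _ _))
  rw [← Real.norm_eq_abs, ← toReal_enorm]
  simpa [ENNReal.toReal_mul, ENNReal.toReal_add hf.eLpNorm_ne_top hf'.eLpNorm_ne_top,
    ENNReal.toReal_rpow] using ENNReal.toReal_mono hfin key

/-- **Coupling moment bound.**  If `f = F(V, X)`, `f̃ = F(V, X̃)` with `X̃` independent of `V`,
`E f̃ = 0`, and both `f, f̃ ∈ L^{J+δ}` with `J ≥ 1`, `δ > 0`, then
`|E f| ≤ (‖f‖_{J+δ} + ‖f̃‖_{J+δ}) · P(X ≠ X̃)^{δ/(J+δ)}`. -/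
theorem coupling_moment_bound {Ω α β : Type*} [MeasurableSpace Ω]
    [MeasurableSpace α] [MeasurableSpace β]
    (μ : Measure Ω) [IsProbabilityMeasure μ]
    (V : Ω → α) (X X' : Ω → β) (F : α → β → ℝ)
    (hV : Measurable V) (hX : Measurable X) (hX' : Measurable X')
    (hF : Measurable (Function.uncurry F))
    (J δ : ℝ) (hJ : 1 ≤ J) (hδ : 0 < δ)
    (hindep : IndepFun X' V μ)
    (hf : MemLp (fun ω => F (V ω) (X ω)) (ENNReal.ofReal (J + δ)) μ)
    (hf' : MemLp (fun ω => F (V ω) (X' ω)) (ENNReal.ofReal (J + δ)) μ)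
    (hmean : ∫ ω, F (V ω) (X' ω) ∂μ = 0) :
    |∫ ω, F (V ω) (X ω) ∂μ| ≤
      ((eLpNorm (fun ω => F (V ω) (X ω)) (ENNReal.ofReal (J + δ)) μ).toReal +
        (eLpNorm (fun ω => F (V ω) (X' ω)) (ENNReal.ofReal (J + δ)) μ).toReal) *
      (μ {ω | X ω ≠ X' ω}).toReal ^ (δ / (J + δ)) :=
  coupling_moment_bound_general μ V X X' F J δ hJ hδ hf hf' hmean
end
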